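/- Let n be a positive integer and let ρ be a complex number with ρ ≠ 1. Then Σ_{j=1}^{n} (−1)^{j+1} · C(n,j) · j · (ρ−1)^{−j} · A_{j−1}(ρ) · ( ρ·Σ_{k=0}^{n−j} C(n−j,k) B_k − B_{n−j} ) = n·B_{n−1}, where B_k are the Bernoulli numbers. -/

import Mathlib

/-!
Put `r_m = A_m(ρ) / (1 - ρ)^(m+1)`, formally `∑_{i ≥ 0} i^m ρ^i`. The power series identity
`A_m(x) = (1 - x)^(m+1) ∑_i i^m x^i` (it is a polynomial because an `(m+1)`-st finite difference of
`i ↦ i^m` vanishes) gives `ρ ∑_m C(M,m) r_m = r_M - [M = 0]`, i.e. `∑ r_m t^m/m! = 1/(1 - ρ e^t)`.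
The bracket `c_k = ρ ∑_l C(k,l) B_l - B_k` is the `k`-th coefficient of the exponential generating
function `(ρ e^t - 1) t/(e^t - 1)`, and the `j`-th summand is `-n C(n-1,j-1) r_{j-1} c_{n-j}`.
So the sum is `-n` times the `(n-1)`-st term of the binomial convolution of `r` and `c`, whose
exponential generating function is `-t/(e^t - 1)`.
-/

open Finset Nat

noncomputable def eulerianNumber (n j : ℕ) : ℂ :=
  ∑ v ∈ Finset.range (j + 1), (-1 : ℂ) ^ v * ((n + 1).choose v : ℂ) * ((j : ℂ) - v) ^ n

noncomputable def eulerianPoly (n : ℕ) (ρ : ℂ) : ℂ :=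
  ∑ j ∈ Finset.range (n + 1), eulerianNumber n j * ρ ^ j

theorem sum_neg_one_pow_mul_choose_mul_sub_pow {R : Type*} [CommRing R] (m : ℕ) (x : R) :
    ∑ v ∈ range (m + 2), (-1 : R) ^ v * ((m + 1).choose v : R) * (x - v) ^ m = 0 := by
  have h := congrFun (fwdDiff_iter_pow_eq_zero_of_lt (R := R) (Nat.lt_succ_self m)) (x - (m + 1))
  rw [fwdDiff_iter_eq_sum_shift, ← sum_range_reflect, Pi.zero_apply] at h
  rw [← h]
  refine sum_congr rfl fun v hv => ?_
  have hv : v ≤ m + 1 := Nat.lt_succ_iff.1 (mem_range.1 hv)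
  rw [show m.succ + 1 - 1 - v = m + 1 - v by omega, show m.succ - (m + 1 - v) = v by omega,
    Nat.succ_eq_add_one, Nat.choose_symm hv, nsmul_one, Nat.cast_sub hv, zsmul_eq_mul]
  push_cast
  ring

theorem eulerianNumber_eq_zero_of_lt {m j : ℕ} (h : m < j) : eulerianNumber m j = 0 := by
  rw [eulerianNumber, ← sum_neg_one_pow_mul_choose_mul_sub_pow m (j : ℂ)]
  refine (sum_subset (range_subset_range.2 (by omega)) fun v _ hv => ?_).symm
  rw [Nat.choose_eq_zero_of_lt (by simp at hv; omega)]
  simp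

open PowerSeries

section PowerSeries

variable (R : Type*) [CommRing R]

theorem one_sub_X_pow_eq_mk (N : ℕ) :
    (1 - X : R⟦X⟧) ^ N = PowerSeries.mk fun v => (-1) ^ v * (N.choose v : R) := by
  have : (1 - X : R⟦X⟧) = rescale (-1) ((1 + Polynomial.X : Polynomial R) : R⟦X⟧) := by
    simp [sub_eq_add_neg]
  ext v
  rw [this, ← map_pow, ← Polynomial.coe_pow, coeff_rescale, coeff_mk, Polynomial.coeff_coe,
    Polynomial.coeff_one_add_X_pow]

theorem X_mul_mk_succ_pow (M : ℕ) :
    X * PowerSeries.mk (fun i => ((i + 1 : ℕ) : R) ^ M)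
      = (PowerSeries.mk fun i => (i : R) ^ M) - C (0 ^ M) := by
  ext (_ | i) <;> simp [coeff_succ_X_mul, -map_pow]

theorem sum_choose_mul_mk_pow (M : ℕ) :
    ∑ m ∈ range (M + 1), (M.choose m : R⟦X⟧) * PowerSeries.mk (fun i => (i : R) ^ m)
      = PowerSeries.mk fun i => ((i + 1 : ℕ) : R) ^ M := by
  ext i
  simp only [map_sum, ← nsmul_eq_mul, map_nsmul, coeff_mk]
  simp only [Nat.cast_add, Nat.cast_one, add_pow, one_pow, mul_one, nsmul_eq_mul']

end PowerSeries

noncomputable def eulerianPolynomial (m : ℕ) : Polynomial ℂ :=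
  ∑ j ∈ range (m + 1), Polynomial.C (eulerianNumber m j) * Polynomial.X ^ j

theorem eval_eulerianPolynomial (m : ℕ) (ρ : ℂ) :
    (eulerianPolynomial m).eval ρ = eulerianPoly m ρ := by
  simp [eulerianPolynomial, eulerianPoly, Polynomial.eval_finsetSum]

theorem coeff_eulerianPolynomial (m j : ℕ) :
    (eulerianPolynomial m).coeff j = eulerianNumber m j := by
  simp only [eulerianPolynomial, Polynomial.finsetSum_coeff, Polynomial.coeff_C_mul_X_pow]
  rw [sum_ite_eq]
  split_ifs with h
  · rfl
  · rw [eulerianNumber_eq_zero_of_lt (by simp at h; omega)]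

theorem coe_eulerianPolynomial (m : ℕ) :
    (eulerianPolynomial m : ℂ⟦X⟧) = (1 - X) ^ (m + 1) * PowerSeries.mk fun i => (i : ℂ) ^ m := by
  ext j
  rw [Polynomial.coeff_coe, coeff_eulerianPolynomial, eulerianNumber, coeff_mul,
    Nat.sum_antidiagonal_eq_sum_range_succ
      (fun a b => coeff a ((1 - X : ℂ⟦X⟧) ^ (m + 1)) * coeff b _)]
  refine sum_congr rfl fun v hv => ?_
  simp only [one_sub_X_pow_eq_mk, coeff_mk]
  rw [Nat.cast_sub (by simp at hv; omega)]

theorem eulerianPolynomial_recurrence (M : ℕ) :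
    Polynomial.X * ∑ m ∈ range (M + 1),
        (M.choose m : Polynomial ℂ) * (1 - Polynomial.X) ^ (M - m) * eulerianPolynomial m
      = eulerianPolynomial M - Polynomial.C (0 ^ M) * (1 - Polynomial.X) ^ (M + 1) := by
  apply Polynomial.coe_injective
  have hsplit : ∀ m ∈ range (M + 1), (M.choose m : ℂ⟦X⟧) * (1 - X) ^ (M - m)
      * ((1 - X) ^ (m + 1) * PowerSeries.mk fun i => (i : ℂ) ^ m)
      = (1 - X) ^ (M + 1) * ((M.choose m : ℂ⟦X⟧) * PowerSeries.mk fun i => (i : ℂ) ^ m) := by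
    intro m hm
    rw [show M + 1 = (M - m) + (m + 1) by simp at hm; omega, pow_add]
    ring
  simp only [← Polynomial.coeToPowerSeries.ringHom_apply (R := ℂ), map_mul, map_sum, map_sub,
    map_natCast]
  simp only [Polynomial.coeToPowerSeries.ringHom_apply, Polynomial.coe_pow, Polynomial.coe_sub,
    Polynomial.coe_one, Polynomial.coe_X, Polynomial.coe_C, coe_eulerianPolynomial]
  rw [sum_congr rfl hsplit, ← mul_sum, sum_choose_mul_mk_pow, mul_left_comm, X_mul_mk_succ_pow]
  ring

noncomputable def eulerianRatio (ρ : ℂ) (m : ℕ) : ℂ := eulerianPoly m ρ / (1 - ρ) ^ (m + 1)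

theorem eulerianRatio_recurrence {ρ : ℂ} (hρ : ρ ≠ 1) (M : ℕ) :
    ρ * ∑ m ∈ range (M + 1), (M.choose m : ℂ) * eulerianRatio ρ m
      = eulerianRatio ρ M - 0 ^ M := by
  have hu : 1 - ρ ≠ 0 := sub_ne_zero.2 hρ.symm
  have h := congrArg (Polynomial.eval ρ) (eulerianPolynomial_recurrence M)
  simp only [Polynomial.eval_mul, Polynomial.eval_finsetSum, Polynomial.eval_sub,
    Polynomial.eval_pow, Polynomial.eval_X, Polynomial.eval_C, Polynomial.eval_one,
    Polynomial.eval_natCast, eval_eulerianPolynomial] at h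
  have hterm : ∀ m ∈ range (M + 1), (M.choose m : ℂ) * eulerianRatio ρ m
      = (M.choose m : ℂ) * (1 - ρ) ^ (M - m) * eulerianPoly m ρ / (1 - ρ) ^ (M + 1) := by
    intro m hm
    rw [eulerianRatio, show M + 1 = (M - m) + (m + 1) by simp at hm; omega,
      pow_add (1 - ρ) (M - m)]
    field_simp
  rw [sum_congr rfl hterm, ← sum_div, ← mul_div_assoc, h, eulerianRatio]
  field_simp

section ExponentialGeneratingFunction

variable {K : Type*} [Field K]

noncomputable def egf : (ℕ → K) →ₗ[K] K⟦X⟧ where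
  toFun a := PowerSeries.mk fun n => a n / (n ! : K)
  map_add' a b := by ext n; simp [add_div]
  map_smul' c a := by ext n; simp [mul_div_assoc]

theorem coeff_egf (a : ℕ → K) (n : ℕ) : coeff n (egf a) = a n / n ! := by
  simp [egf]

theorem C_mul_egf (c : K) (a : ℕ → K) : C c * egf a = egf (c • a) := by
  rw [map_smul, smul_eq_C_mul]

variable [CharZero K]

theorem egf_injective : Function.Injective (egf (K := K)) := by
  intro a b h
  funext n
  have := congrArg (coeff n) h
  rwa [coeff_egf, coeff_egf, div_left_inj' (by exact_mod_cast n.factorial_ne_zero)] at this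

theorem egf_mul_egf (a b : ℕ → K) :
    egf a * egf b = egf fun n => ∑ i ∈ range (n + 1), (n.choose i : K) * a i * b (n - i) := by
  ext n
  rw [coeff_mul,
    Nat.sum_antidiagonal_eq_sum_range_succ (fun i j => coeff i (egf a) * coeff j (egf b)),
    coeff_egf, sum_div]
  refine sum_congr rfl fun i hi => ?_
  rw [coeff_egf, coeff_egf, Nat.cast_choose K (by simp at hi; omega)]
  field_simp [n.factorial_ne_zero]

theorem exp_eq_egf : exp K = egf fun _ => 1 := by
  ext n
  simp [coeff_egf]

theorem bernoulliPowerSeries_eq_egf :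
    bernoulliPowerSeries K = egf fun n => (bernoulli n : K) := by
  ext n
  simp [bernoulliPowerSeries, coeff_egf]

theorem one_eq_egf : (1 : K⟦X⟧) = egf fun n => 0 ^ n := by
  ext (_ | n) <;> simp [coeff_egf]

end ExponentialGeneratingFunction

theorem egf_eulerianRatio_mul_one_sub_C_mul_exp {ρ : ℂ} (hρ : ρ ≠ 1) :
    egf (eulerianRatio ρ) * (1 - C ρ * exp ℂ) = 1 := by
  rw [mul_sub, mul_one, mul_left_comm, exp_eq_egf, egf_mul_egf, C_mul_egf, one_eq_egf, ← map_sub]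
  congr 1
  funext M
  simp only [mul_one, Pi.sub_apply, Pi.smul_apply, smul_eq_mul, eulerianRatio_recurrence hρ]
  ring

theorem bernoulliPowerSeries_mul_C_mul_exp_sub_one (ρ : ℂ) :
    bernoulliPowerSeries ℂ * (C ρ * exp ℂ - 1) = egf fun k =>
      ρ * ∑ l ∈ range (k + 1), (k.choose l : ℂ) * bernoulli l - bernoulli k := by
  rw [mul_sub, mul_one, mul_left_comm, exp_eq_egf, bernoulliPowerSeries_eq_egf, egf_mul_egf,
    C_mul_egf, ← map_sub]
  congr 1
  funext k
  simp

theorem sum_choose_mul_eulerianRatio_mul {ρ : ℂ} (hρ : ρ ≠ 1) (N : ℕ) :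
    ∑ i ∈ range (N + 1), (N.choose i : ℂ) * eulerianRatio ρ i *
        (ρ * ∑ l ∈ range (N - i + 1), ((N - i).choose l : ℂ) * bernoulli l - bernoulli (N - i))
      = -bernoulli N := by
  have h : egf (eulerianRatio ρ) * (bernoulliPowerSeries ℂ * (C ρ * exp ℂ - 1))
      = egf fun n => -(bernoulli n : ℂ) := by
    rw [show (fun n => -(bernoulli n : ℂ)) = -fun n => (bernoulli n : ℂ) from rfl, map_neg,
      ← bernoulliPowerSeries_eq_egf]
    linear_combination (-bernoulliPowerSeries ℂ) * egf_eulerianRatio_mul_one_sub_C_mul_exp hρ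
  rw [bernoulliPowerSeries_mul_C_mul_exp_sub_one, egf_mul_egf] at h
  exact congrFun (egf_injective h) N

theorem neg_one_pow_mul_choose_mul_zpow_mul_eulerianPoly {ρ : ℂ} (hρ : ρ ≠ 1) (N i : ℕ) :
    (-1 : ℂ) ^ (i + 1 + 1) * ((N + 1).choose (i + 1) : ℂ) * ((i + 1 : ℕ) : ℂ) *
        (ρ - 1) ^ (-((i + 1 : ℕ) : ℤ)) * eulerianPoly i ρ
      = -((N + 1 : ℕ) : ℂ) * ((N.choose i : ℂ) * eulerianRatio ρ i) := by
  have hu : 1 - ρ ≠ 0 := sub_ne_zero.2 hρ.symm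
  have hchoose : ((N + 1).choose (i + 1) : ℂ) * ((i + 1 : ℕ) : ℂ)
      = ((N + 1 : ℕ) : ℂ) * N.choose i := by
    exact_mod_cast (Nat.add_one_mul_choose_eq N i).symm
  rw [zpow_neg, zpow_natCast, show ρ - 1 = -(1 - ρ) by ring, eulerianRatio]
  field_simp
  rw [neg_pow (1 - ρ)]
  linear_combination (-1) ^ (i + 1 + 1) * eulerianPoly i ρ * (1 - ρ) ^ (i + 1) * hchoose

theorem stmt10_general (n : ℕ) (ρ : ℂ) (hρ : ρ ≠ 1) :
    ∑ j ∈ Finset.Icc 1 n,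
        (-1 : ℂ) ^ (j + 1) * (n.choose j : ℂ) * (j : ℂ) * (ρ - 1) ^ (-(j : ℤ)) *
          eulerianPoly (j - 1) ρ *
          (ρ * (∑ k ∈ Finset.range (n - j + 1), ((n - j).choose k : ℂ) * (bernoulli k : ℂ)) -
            (bernoulli (n - j) : ℂ)) =
      (n : ℂ) * (bernoulli (n - 1) : ℂ) := by
  rcases n with _ | N
  · simp
  rw [← Ico_add_one_right_eq_Icc, sum_Ico_eq_sum_range, add_tsub_cancel_right,
    add_tsub_cancel_right, ← neg_neg (bernoulli N : ℂ), ← sum_choose_mul_eulerianRatio_mul hρ N,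
    mul_neg, ← neg_mul, mul_sum]
  refine sum_congr rfl fun i _ => ?_
  rw [add_comm 1 i, add_tsub_cancel_right, Nat.add_sub_add_right,
    neg_one_pow_mul_choose_mul_zpow_mul_eulerianPoly hρ]
  ring

/-- Here `bernoulli` is Mathlib's Bernoulli-number sequence with `B₁ = −1/2`, i.e. the one
defined by `t/(e^t − 1) = Σ_{k≥0} B_k t^k/k!`. -/
theorem stmt10 (n : ℕ) (hn : 0 < n) (ρ : ℂ) (hρ : ρ ≠ 1) :
    ∑ j ∈ Finset.Icc 1 n,
        (-1 : ℂ) ^ (j + 1) * (n.choose j : ℂ) * (j : ℂ) * (ρ - 1) ^ (-(j : ℤ)) *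
          eulerianPoly (j - 1) ρ *
          (ρ * (∑ k ∈ Finset.range (n - j + 1), ((n - j).choose k : ℂ) * (bernoulli k : ℂ)) -
            (bernoulli (n - j) : ℂ)) =
      (n : ℂ) * (bernoulli (n - 1) : ℂ) :=
  stmt10_general n ρ hρ
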